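/- Let X, Y, Z be Banach spaces and 1 ≤ p < ∞. Suppose that L_1(μ) is separable for every μ ∈ P(B_{X*}) and that Y is separable. Let U be a closed subspace of UM(X*,Y) and let S : U → Z be an (ℓ^s_p,ℓ_p)-controlled operator. Then S has separable range. -/

import Mathlib

open MeasureTheory Filter Topology

/-- The closed unit ball of the dual of `X`, equipped with the weak* topology. -/
abbrev DualBall (X : Type*) [NormedAddCommGroup X] [NormedSpace ℝ X] : Type _ :=
  {φ : WeakDual ℝ X // ‖WeakDual.toStrongDual φ‖ ≤ 1}

noncomputable instance (X : Type*) [NormedAddCommGroup X] [NormedSpace ℝ X] :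
    MeasurableSpace (DualBall X) := borel _

instance (X : Type*) [NormedAddCommGroup X] [NormedSpace ℝ X] :
    BorelSpace (DualBall X) := ⟨rfl⟩

variable {X Y Z : Type*} [NormedAddCommGroup X] [NormedSpace ℝ X]
  [NormedAddCommGroup Y] [NormedSpace ℝ Y] [NormedAddCommGroup Z] [NormedSpace ℝ Z]

/-- The restriction of an operator `T : X* → Y` to the dual unit ball. -/
noncomputable def evalBall (T : StrongDual ℝ X →L[ℝ] Y) (φ : DualBall X) : Y :=
  T (WeakDual.toStrongDual φ.1)

/-- `T` belongs to `UM(X*,Y)`: its restriction to the dual ball is universally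
strongly measurable. -/
def MemUM (T : StrongDual ℝ X →L[ℝ] Y) : Prop :=
  ∀ (μ : Measure (DualBall X)), IsProbabilityMeasure μ → μ.Regular →
    AEStronglyMeasurable (evalBall T) μ

/-- `T` belongs to the ε-product `X ε Y`: its restriction to the dual ball is
weak*-to-norm continuous. -/
def MemEps (T : StrongDual ℝ X →L[ℝ] Y) : Prop :=
  Continuous (evalBall T)

/-- `S` is `(ℓ^s_p, ℓ_p)`-summing. -/
def IsLpSumming (p : ℝ) (U : Submodule ℝ (StrongDual ℝ X →L[ℝ] Y))
    (S : U →L[ℝ] Z) : Prop :=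
  ∃ K : ℝ, 0 ≤ K ∧ ∀ (n : ℕ) (T : Fin n → U),
    (∑ i, ‖S (T i)‖ ^ p) ^ (1/p) ≤
      K * ⨆ φ : DualBall X, (∑ i, ‖evalBall (T i : StrongDual ℝ X →L[ℝ] Y) φ‖ ^ p) ^ (1/p)

/-- `S` is `(ℓ^s_p, ℓ_p)`-controlled. -/
def IsLpControlled (p : ℝ) (U : Submodule ℝ (StrongDual ℝ X →L[ℝ] Y))
    (S : U →L[ℝ] Z) : Prop :=
  ∃ K : ℝ, 0 ≤ K ∧ ∃ μ : Measure (DualBall X), IsProbabilityMeasure μ ∧ μ.Regular ∧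
    ∀ T : U, ‖S T‖ ≤
      K * (∫ φ, ‖evalBall (T : StrongDual ℝ X →L[ℝ] Y) φ‖ ^ p ∂μ) ^ (1/p)

/-- SOT convergence of a sequence of operators. -/
def SOTConvergesTo (T : ℕ → (StrongDual ℝ X →L[ℝ] Y))
    (T₀ : StrongDual ℝ X →L[ℝ] Y) : Prop :=
  ∀ x' : StrongDual ℝ X, Tendsto (fun n => ‖T n x' - T₀ x'‖) atTop (𝓝 0)

/-!
A controlled operator is Lipschitz for the `L_p(μ; Y)`-distance between restrictions to the dual
ball, so its range is separable as soon as `L_p(μ; Y)` is. That holds because separability of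
`L_1(μ)` makes `μ` a separable measure: the indicators of sets of finite measure form a separable
subset of `L_1(μ)`, and `‖1_s - 1_t‖₁ = μ (s ∆ t)`.
-/

open scoped ENNReal symmDiff

theorem TopologicalSpace.isSeparable_range_of_dist_le_mul {ι E F : Type*} [MetricSpace E]
    [PseudoMetricSpace F] {f : ι → E} {g : ι → F} {K : ℝ}
    (h : ∀ i j, dist (f i) (f j) ≤ K * dist (g i) (g j)) (hg : IsSeparable (Set.range g)) :
    IsSeparable (Set.range f) := by
  have := hg.separableSpace
  choose lift hlift using fun y : Set.range g => y.2
  have hfactor : ∀ i, f (lift ⟨g i, i, rfl⟩) = f i := fun i =>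
    dist_le_zero.1 <| by simpa [hlift] using h (lift ⟨g i, i, rfl⟩) i
  have hLip : LipschitzWith (Real.toNNReal K) (f ∘ lift) :=
    .of_dist_le' fun y y' => by simpa [hlift, Subtype.dist_eq] using h (lift y) (lift y')
  refine (isSeparable_range hLip.continuous).mono ?_
  rintro - ⟨i, rfl⟩
  exact ⟨_, hfactor i⟩

namespace MeasureTheory

theorem Measure.isSeparable_of_separableSpace_L1 {α : Type*} [MeasurableSpace α]
    (μ : Measure α) [TopologicalSpace.SeparableSpace (Lp ℝ 1 μ)] : IsSeparable μ := by
  let F : {s : Set α // MeasurableSet s ∧ μ s ≠ ∞} → Lp ℝ 1 μ :=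
    fun s => indicatorConstLp 1 s.2.1 s.2.2 1
  obtain ⟨t, htF, htc, hdense⟩ :=
    (TopologicalSpace.IsSeparable.of_separableSpace (Set.range F)).exists_countable_dense_subset
  choose rep hrep using fun x : t => htF x.2
  have := htc.to_subtype
  refine ⟨Set.range fun x => (rep x).1, Set.countable_range _, ⟨?_, ?_⟩⟩
  · rintro - ⟨x, rfl⟩
    exact (rep x).2.1
  · intro s hs hμs ε hε
    obtain ⟨y, hyt, hy⟩ := Metric.mem_closure_iff.1 (hdense ⟨⟨s, hs, hμs⟩, rfl⟩) ε hε
    rw [← show F (rep ⟨y, hyt⟩) = y from hrep _, dist_indicatorConstLp_eq_norm,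
      norm_indicatorConstLp one_ne_zero ENNReal.one_ne_top] at hy
    refine ⟨_, ⟨⟨y, hyt⟩, rfl⟩, ?_⟩
    rw [ENNReal.lt_ofReal_iff_toReal_lt (measure_symmDiff_ne_top hμs (rep _).2.2)]
    simpa [measureReal_def] using hy

theorem MemLp.dist_toLp_eq_integral_rpow {α E : Type*} [MeasurableSpace α] {μ : Measure α}
    [NormedAddCommGroup E] {p : ℝ} [Fact (1 ≤ ENNReal.ofReal p)] {f g : α → E}
    (hf : MemLp f (ENNReal.ofReal p) μ) (hg : MemLp g (ENNReal.ofReal p) μ) :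
    dist (hf.toLp f) (hg.toLp g) = (∫ x, ‖f x - g x‖ ^ p ∂μ) ^ (1 / p) := by
  have hp : 0 < p := ENNReal.ofReal_pos.1 <| one_pos.trans_le Fact.out
  rw [dist_eq_norm, ← toLp_sub, Lp.norm_toLp, (hf.sub hg).eLpNorm_eq_integral_rpow_norm
    (by simpa using hp) ENNReal.ofReal_ne_top, ENNReal.toReal_ofReal (by positivity),
    ENNReal.toReal_ofReal hp.le, one_div]
  rfl

end MeasureTheory

theorem norm_evalBall_le (T : StrongDual ℝ X →L[ℝ] Y) (φ : DualBall X) :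
    ‖evalBall T φ‖ ≤ ‖T‖ :=
  (T.le_of_opNorm_le_of_le le_rfl φ.2).trans_eq (mul_one _)

theorem MemUM.memLp {T : StrongDual ℝ X →L[ℝ] Y} (hT : MemUM T) {μ : Measure (DualBall X)}
    [IsProbabilityMeasure μ] (hμ : μ.Regular) (q : ℝ≥0∞) : MemLp (evalBall T) q μ :=
  .of_bound (hT μ ‹_› hμ) ‖T‖ (.of_forall (norm_evalBall_le T))

theorem separable_range_of_lp_controlled_general
    (p : ℝ) (hp : 1 ≤ p)
    (hL1 : ∀ μ : Measure (DualBall X), IsProbabilityMeasure μ → μ.Regular →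
      TopologicalSpace.SeparableSpace (Lp ℝ 1 μ))
    (hYsep : TopologicalSpace.SeparableSpace Y)
    (U : Submodule ℝ (StrongDual ℝ X →L[ℝ] Y))
    (hUM : ∀ T ∈ U, MemUM T)
    (S : U →L[ℝ] Z) (hS : IsLpControlled p U S) :
    TopologicalSpace.IsSeparable (Set.range fun T : U => S T) := by
  obtain ⟨K, -, μ, hprob, hreg, hbound⟩ := hS
  have := hL1 μ hprob hreg
  have := hYsep
  have := μ.isSeparable_of_separableSpace_L1
  have : Fact (1 ≤ ENNReal.ofReal p) := ⟨by simpa using hp⟩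
  have : Fact (ENNReal.ofReal p ≠ ∞) := ⟨ENNReal.ofReal_ne_top⟩
  -- instance search does not find this for submodules of this operator space
  let : AddCommGroup U := Submodule.addCommGroup (R := ℝ) (M := StrongDual ℝ X →L[ℝ] Y) U
  let J : U → Lp Y (ENNReal.ofReal p) μ := fun T => ((hUM T T.2).memLp hreg _).toLp _
  refine TopologicalSpace.isSeparable_range_of_dist_le_mul (g := J) (K := K) (fun T T' => ?_)
    (.of_separableSpace _)
  rw [dist_eq_norm, ← map_sub, MemLp.dist_toLp_eq_integral_rpow]
  exact hbound (T - T')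

/-- If `L_1(μ)` is separable for every regular Borel probability measure `μ` on the dual
ball of `X`, `Y` is separable, and `S` is an `(ℓ^s_p, ℓ_p)`-controlled operator defined on
a closed subspace `U` of `UM(X*,Y)`, then `S` has separable range. -/
theorem separable_range_of_lp_controlled
    [CompleteSpace X] [CompleteSpace Y] [CompleteSpace Z]
    (p : ℝ) (hp : 1 ≤ p)
    (hL1 : ∀ μ : Measure (DualBall X), IsProbabilityMeasure μ → μ.Regular →
      TopologicalSpace.SeparableSpace (Lp ℝ 1 μ))
    (hYsep : TopologicalSpace.SeparableSpace Y)
    (U : Submodule ℝ (StrongDual ℝ X →L[ℝ] Y))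
    (hUclosed : IsClosed (U : Set (StrongDual ℝ X →L[ℝ] Y)))
    (hUM : ∀ T ∈ U, MemUM T)
    (S : U →L[ℝ] Z) (hS : IsLpControlled p U S) :
    TopologicalSpace.IsSeparable (Set.range fun T : U => S T) :=
  separable_range_of_lp_controlled_general p hp hL1 hYsep U hUM S hS
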